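/- Let G be a k-geodetic digraph (k ≥ 2) with out-degree 2, order M(2,k)+2, and in-degree sequence (1,1,1,2,...,2,3,3,3). Then every vertex of in-degree 3 has at least one in-neighbour of in-degree 1. -/

import Mathlib

/-- Moore bound `M(d,k) = 1 + d + ... + d^k`. -/
def moore (d k : ℕ) : ℕ := ∑ i ∈ Finset.range (k + 1), d ^ i

/-- Moore bound with integer argument, with the convention `M(d,k) = 0` for `k < 0`. -/
def mooreZ (d : ℕ) (j : ℤ) : ℕ := if j < 0 then 0 else moore d j.toNat

/-- Walks of length at most `k` from `u` to `v` in the digraph with arc relation `A`,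
encoded as vertex lists (so a walk of length `≤ k` is a list of length `≤ k+1`). -/
def walksUpTo {V : Type*} (A : V → V → Prop) (k : ℕ) (u v : V) : Set (List V) :=
  {l | l.Chain' A ∧ l.head? = some u ∧ l.getLast? = some v ∧ l.length ≤ k + 1}

/-- A digraph is `k`-geodetic if between any ordered pair of vertices there is at most
one directed walk of length at most `k`. -/
def IsGeodetic {V : Type*} (A : V → V → Prop) (k : ℕ) : Prop :=
  ∀ u v : V, (walksUpTo A k u v).Subsingleton

/-- `v` is reachable from `u` by a directed walk of length at most `k`. -/
def reachIn {V : Type*} (A : V → V → Prop) (k : ℕ) (u v : V) : Prop :=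
  (walksUpTo A k u v).Nonempty

/-- Out-degree of a vertex. -/
noncomputable def outDeg {V : Type*} (A : V → V → Prop) (u : V) : ℕ := {v | A u v}.ncard

/-- In-degree of a vertex. -/
noncomputable def inDeg {V : Type*} (A : V → V → Prop) (v : V) : ℕ := {u | A u v}.ncard

/-- The outlier set `O(u)`: vertices not reachable from `u` within distance `k`. -/
def outlier {V : Type*} (A : V → V → Prop) (k : ℕ) (u : V) : Set V :=
  {v | ¬ reachIn A k u v}

/-!
Suppose a vertex `v` of in-degree 3 has no in-neighbour of in-degree 1, and let `L j` be the set
of vertices with a walk of length `j` to `v`. For `j ≤ k`, geodecity makes these layers pairwise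
disjoint, and makes the in-neighbourhoods of distinct vertices of `L j` disjoint subsets of
`L (j + 1)`; hence `|L (j + 1)| ≥ 2 |L j| - c j`, where `c j` counts the vertices of in-degree 1
in `L j`. With `|L 1| = 3`, `c 0 = c 1 = 0` and `∑ c j ≤ 3` this gives
`|L j| ≥ 3 · 2^(j-1) - 3 · 2^(j-3)` for `j ≥ 3`, so the layers contain at least
`9 · 2^(k-2) + 1` vertices, more than the `2^(k+1) + 1` available.
-/

open Finset

theorem two_mul_two_pow_mul_le_of_two_mul_le {b d : ℕ → ℕ} {n : ℕ}
    (h : ∀ m < n, 2 * b m ≤ b (m + 1) + d m) :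
    ∀ m ≤ n, 2 * 2 ^ m * b 0 ≤ 2 * b m + 2 ^ m * ∑ i ∈ range m, d i := by
  intro m hm
  induction m with
  | zero => simp
  | succ m ih =>
    have hstep := h m (by omega)
    have hpow : 1 ≤ 2 ^ m := Nat.one_le_two_pow
    rw [sum_range_succ, pow_succ]
    nlinarith [ih (by omega)]

theorem two_pow_succ_add_one_lt_sum {a c : ℕ → ℕ} {k : ℕ} (hk : 2 ≤ k) (ha0 : a 0 = 1)
    (ha1 : a 1 = 3) (hc1 : c 1 = 0) (hgrow : ∀ j < k, 2 * a j ≤ a (j + 1) + c j)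
    (hc : ∑ j ∈ range (k + 1), c j ≤ 3) :
    2 ^ (k + 1) + 1 < ∑ j ∈ range (k + 1), a j := by
  obtain ⟨n, rfl⟩ : ∃ n, k = n + 2 := ⟨k - 2, by omega⟩
  change ∑ j ∈ range (n + 3), c j ≤ 3 at hc
  have ha2 : 6 ≤ a 2 := by simpa [ha1, hc1] using hgrow 1 (by omega)
  have hdouble := two_mul_two_pow_mul_le_of_two_mul_le (b := fun m => a (m + 2))
    (d := fun m => c (m + 2)) (n := n) (fun m hm => hgrow (m + 2) (by omega))
  have hlevel : ∀ m, 1 ≤ m → m ≤ n → 9 * 2 ^ m ≤ 2 * a (m + 2) := by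
    intro m hm1 hmn
    have hloss : ∑ i ∈ range m, c (i + 2) ≤ 3 := by
      have := sum_le_sum_of_subset (f := c) (range_subset_range.2 (show m + 2 ≤ n + 3 by omega))
      rw [sum_range_succ', sum_range_succ'] at this
      simp only [add_assoc, Nat.reduceAdd, zero_add] at this
      omega
    have := hdouble m hmn
    nlinarith
  have hsum : ∀ m ≤ n, 9 * 2 ^ (m + 1) + 2 ≤ 2 * ∑ j ∈ range (m + 3), a j := by
    intro m hm
    induction m with
    | zero => simp [sum_range_succ, ha0, ha1]; omega
    | succ m ih =>
      rw [sum_range_succ, pow_succ]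
      have := hlevel (m + 1) (by omega) hm
      rw [pow_succ] at this ih ⊢
      nlinarith [ih (by omega)]
  have := hsum n le_rfl
  show 2 ^ (n + 3) + 1 < ∑ j ∈ range (n + 3), a j
  have hpow : 2 ^ (n + 3) = 4 * 2 ^ (n + 1) := by ring
  have : 1 ≤ 2 ^ (n + 1) := Nat.one_le_two_pow
  omega

theorem moore_two_add_one (k : ℕ) : moore 2 k + 1 = 2 ^ (k + 1) := by
  rw [moore, Nat.geomSum_eq le_rfl, Nat.div_one]
  exact Nat.sub_add_cancel Nat.one_le_two_pow

section Layers

variable {V : Type*} {A : V → V → Prop}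

theorem walksUpTo_mono {i j : ℕ} (hij : i ≤ j) {u v : V} :
    walksUpTo A i u v ⊆ walksUpTo A j u v :=
  fun _ ⟨hchain, hhead, hlast, hlen⟩ => ⟨hchain, hhead, hlast, hlen.trans (by omega)⟩

theorem cons_mem_walksUpTo {j : ℕ} {u w v : V} {l : List V} (hl : l ∈ walksUpTo A j w v)
    (huw : A u w) : u :: l ∈ walksUpTo A (j + 1) u v := by
  obtain ⟨hchain, hhead, hlast, hlen⟩ := hl
  obtain ⟨t, rfl⟩ := List.head?_eq_some_iff.1 hhead
  exact ⟨List.isChain_cons_cons.2 ⟨huw, hchain⟩, rfl, by rwa [List.getLast?_cons_cons],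
    by simpa using hlen⟩

theorem IsGeodetic.eq_of_mem_walksUpTo {k i j : ℕ} (hgeo : IsGeodetic A k) (hi : i ≤ k)
    (hj : j ≤ k) {u v : V} {l l' : List V} (hl : l ∈ walksUpTo A i u v)
    (hl' : l' ∈ walksUpTo A j u v) : l = l' :=
  hgeo u v (walksUpTo_mono hi hl) (walksUpTo_mono hj hl')

variable [Fintype V]

variable (A) in
open Classical in
noncomputable def inNbrs (v : V) : Finset V := {u | A u v}.toFinset

theorem mem_inNbrs {u v : V} : u ∈ inNbrs A v ↔ A u v := by
  simp [inNbrs]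

open Classical in
theorem card_inNbrs (v : V) : (inNbrs A v).card = inDeg A v :=
  (Set.ncard_eq_toFinset_card' _).symm

variable [DecidableEq V]

variable (A) in
/-- The vertices with a walk of length exactly `j` to `v`; in a `k`-geodetic digraph and for
`j ≤ k`, these are the vertices at distance `j` from `v`, the levels of the paper's
`T_{-k}(v)`. -/
noncomputable def inLayer (v : V) : ℕ → Finset V
  | 0 => {v}
  | j + 1 => (inLayer v j).biUnion (inNbrs A)

theorem inLayer_one (v : V) : inLayer A v 1 = inNbrs A v :=
  singleton_biUnion

theorem exists_walk_of_mem_inLayer {v u : V} {j : ℕ} (hu : u ∈ inLayer A v j) :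
    ∃ l ∈ walksUpTo A j u v, l.length = j + 1 := by
  induction j generalizing u with
  | zero =>
    obtain rfl := mem_singleton.1 hu
    exact ⟨[u], ⟨List.isChain_singleton u, rfl, rfl, le_rfl⟩, rfl⟩
  | succ j ih =>
    obtain ⟨w, hw, huw⟩ := mem_biUnion.1 hu
    obtain ⟨l, hl, hlen⟩ := ih hw
    exact ⟨u :: l, cons_mem_walksUpTo hl (mem_inNbrs.1 huw), by simp [hlen]⟩

variable {k : ℕ}

theorem IsGeodetic.disjoint_inLayer (hgeo : IsGeodetic A k) {i j : ℕ} (hi : i ≤ k)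
    (hj : j ≤ k) (hij : i ≠ j) (v : V) :
    Disjoint (inLayer A v i) (inLayer A v j) := by
  refine disjoint_left.2 fun u hui huj => hij ?_
  obtain ⟨l, hl, hlen⟩ := exists_walk_of_mem_inLayer hui
  obtain ⟨l', hl', hlen'⟩ := exists_walk_of_mem_inLayer huj
  obtain rfl := hgeo.eq_of_mem_walksUpTo hi hj hl hl'
  omega

theorem IsGeodetic.pairwiseDisjoint_inNbrs (hgeo : IsGeodetic A k) {j : ℕ} (hj : j < k)
    (v : V) :
    (inLayer A v j : Set V).PairwiseDisjoint (inNbrs A) := by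
  intro u₁ hu₁ u₂ hu₂ hne
  refine disjoint_left.2 fun w hw₁ hw₂ => hne ?_
  obtain ⟨l₁, hl₁, -⟩ := exists_walk_of_mem_inLayer hu₁
  obtain ⟨l₂, hl₂, -⟩ := exists_walk_of_mem_inLayer hu₂
  have hcons := hgeo.eq_of_mem_walksUpTo hj hj (cons_mem_walksUpTo hl₁ (mem_inNbrs.1 hw₁))
    (cons_mem_walksUpTo hl₂ (mem_inNbrs.1 hw₂))
  obtain rfl := List.cons_injective hcons
  exact Option.some_injective _ (hl₁.2.1.symm.trans hl₂.2.1)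

theorem IsGeodetic.card_inLayer_succ (hgeo : IsGeodetic A k) {j : ℕ} (hj : j < k) (v : V) :
    (inLayer A v (j + 1)).card = ∑ u ∈ inLayer A v j, inDeg A u := by
  rw [inLayer, card_biUnion (hgeo.pairwiseDisjoint_inNbrs hj v)]
  simp only [card_inNbrs]

theorem IsGeodetic.two_mul_card_inLayer_le (hgeo : IsGeodetic A k) (hpos : ∀ u, inDeg A u ≠ 0)
    {j : ℕ} (hj : j < k) (v : V) :
    2 * (inLayer A v j).card ≤
      (inLayer A v (j + 1)).card + ((inLayer A v j).filter (inDeg A · = 1)).card := by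
  rw [hgeo.card_inLayer_succ hj, card_filter, ← sum_add_distrib, mul_comm, ← smul_eq_mul,
    ← sum_const]
  refine sum_le_sum fun u _ => ?_
  have := hpos u
  split_ifs <;> omega

theorem IsGeodetic.sum_card_filter_inLayer_le (hgeo : IsGeodetic A k) (p : V → Prop)
    [DecidablePred p] (v : V) :
    ∑ j ∈ range (k + 1), ((inLayer A v j).filter p).card ≤ (univ.filter p).card := by
  rw [← card_biUnion]
  · exact card_le_card (biUnion_subset.2 fun j _ => filter_subset_filter _ (subset_univ _))
  · intro i hi j hj hij
    exact (hgeo.disjoint_inLayer (by simpa [Nat.lt_succ_iff] using hi)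
      (by simpa [Nat.lt_succ_iff] using hj) hij v).mono (filter_subset _ _) (filter_subset _ _)

end Layers

theorem stmt16_general {V : Type*} [Fintype V] (A : V → V → Prop) (k : ℕ) (hk : 2 ≤ k)
    (hgeo : IsGeodetic A k)
    (hcard : Fintype.card V = moore 2 k + 2)
    (h1 : {v : V | inDeg A v = 1}.ncard = 3)
    (hall : ∀ v : V, inDeg A v = 1 ∨ inDeg A v = 2 ∨ inDeg A v = 3) :
    ∀ v' : V, inDeg A v' = 3 → ∃ v : V, inDeg A v = 1 ∧ A v v' := by
  classical
  intro v' hv3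
  by_contra! hcon
  have hpos (u : V) : inDeg A u ≠ 0 := by rcases hall u with h | h | h <;> omega
  have hlayers := hgeo.sum_card_filter_inLayer_le (fun _ => True) v'
  simp only [filter_true, card_univ, hcard] at hlayers
  have hdeg1 := hgeo.sum_card_filter_inLayer_le (inDeg A · = 1) v'
  rw [← coe_filter_univ, Set.ncard_coe_finset] at h1
  rw [h1] at hdeg1
  refine (two_pow_succ_add_one_lt_sum (a := fun j => (inLayer A v' j).card) hk
    (card_singleton v') (by rw [inLayer_one, card_inNbrs, hv3]) ?_
    (fun j hj => hgeo.two_mul_card_inLayer_le hpos hj v') hdeg1).not_ge ?_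
  · rw [inLayer_one, card_eq_zero, filter_eq_empty_iff]
    exact fun u hu hu1 => hcon u hu1 (mem_inNbrs.1 hu)
  · rw [← moore_two_add_one]
    omega

/-- Let `G` be a `k`-geodetic digraph (`k ≥ 2`) with out-degree 2, order
`M(2,k)+2`, and in-degree sequence `(1,1,1,2,…,2,3,3,3)`.  Then every vertex of
in-degree 3 has at least one in-neighbour of in-degree 1. -/
theorem stmt16 {V : Type*} [Fintype V] (A : V → V → Prop) (k : ℕ) (hk : 2 ≤ k)
    (hgeo : IsGeodetic A k) (hout : ∀ u : V, outDeg A u = 2)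
    (hcard : Fintype.card V = moore 2 k + 2)
    (h1 : {v : V | inDeg A v = 1}.ncard = 3)
    (h3 : {v : V | inDeg A v = 3}.ncard = 3)
    (hall : ∀ v : V, inDeg A v = 1 ∨ inDeg A v = 2 ∨ inDeg A v = 3) :
    ∀ v' : V, inDeg A v' = 3 → ∃ v : V, inDeg A v = 1 ∧ A v v' :=
  stmt16_general A k hk hgeo hcard h1 hall
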